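/- arXiv:2306.07010 — 2 statements merged into one kernel-verified Lean document; each statement's English description precedes it below -/
import Mathlib

section
/- For all integers n ≥ 0 (with the convention that an empty sum is zero), ∑_{i=1}^{n-1} C(n,i) · |(1/2)_i| · |(1/2)_{n-i}| ≤ 2 · |(1/2)_n|, ∑_{i=1}^{n} C(n,i) · |(1/2)_i| · |(1/2)_{n-i}| ≤ 3 · |(1/2)_n|, and ∑_{i=0}^{n} C(n,i) · |(1/2)_i| · |(1/2)_{n-i}| ≤ 4 · |(1/2)_n|. -/
open Polynomial Finset

/-- The absolute value of the falling factorial `(1/2)_n`. -/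
noncomputable def ff (n : ℕ) : ℝ := |(descPochhammer ℝ n).eval (1/2 : ℝ)|


lemma smev (k : ℕ) (x : ℝ) : (descPochhammer ℤ k).smeval x = (descPochhammer ℝ k).eval x := by
  rw [← aeval_eq_smeval, aeval_def, eval₂_eq_eval_map, descPochhammer_map]

lemma evalone (k : ℕ) (hk : 2 ≤ k) : (descPochhammer ℝ k).eval (1:ℝ) = 0 := by
  obtain ⟨m, rfl⟩ := Nat.exists_eq_add_of_le hk
  induction m with
  | zero => simp [descPochhammer_succ_eval]
  | succ m ih =>
    rw [show 2 + (m+1) = (2+m) + 1 by ring, descPochhammer_succ_eval, ih (by omega)]; ring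

lemma vand (n : ℕ) (hn : 2 ≤ n) :
    ∑ k ∈ range (n+1), (n.choose k : ℝ) *
      ((descPochhammer ℝ k).eval (1/2:ℝ) * (descPochhammer ℝ (n-k)).eval (1/2:ℝ)) = 0 := by
  have := Ring.descPochhammer_smeval_add (R := ℝ) (r := (1:ℝ)/2) (s := (1:ℝ)/2) n (Commute.all _ _)
  simp only [smev] at this
  rw [Finset.Nat.sum_antidiagonal_eq_sum_range_succ_mk] at this
  have h1 : (1:ℝ)/2 + 1/2 = 1 := by norm_num
  rw [h1, evalone n hn] at this
  exact this.symm

lemma sign_P (n : ℕ) (h : 1 ≤ n) : 0 < (-1:ℝ)^(n+1) * (descPochhammer ℝ n).eval (1/2 : ℝ) := by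
  induction n, h using Nat.le_induction with
  | base => simp [descPochhammer_succ_eval]
  | succ n hn ih =>
    rw [descPochhammer_succ_eval]
    have hf : ((1:ℝ)/2 - n) < 0 := by
      have : (1:ℝ) ≤ n := by exact_mod_cast hn
      linarith
    have h2 : 0 < ((-1:ℝ)^(n+1) * (descPochhammer ℝ n).eval (1/2:ℝ)) * (-(1/2 - (n:ℝ))) :=
      mul_pos ih (by linarith)
    calc (0:ℝ) < ((-1)^(n+1) * (descPochhammer ℝ n).eval (1/2:ℝ)) * (-(1/2 - (n:ℝ))) := h2
    _ = (-1)^(n+1+1) * ((descPochhammer ℝ n).eval (1/2:ℝ) * (1/2 - (n:ℝ))) := by ring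

lemma P_eq (n : ℕ) (h : 1 ≤ n) :
    (descPochhammer ℝ n).eval (1/2 : ℝ) = (-1:ℝ)^(n+1) * ff n := by
  have hs := sign_P n h
  rcases Nat.even_or_odd (n+1) with he | ho
  · rw [he.neg_one_pow, one_mul] at hs ⊢
    rw [ff, abs_of_pos hs]
  · rw [ho.neg_one_pow, neg_one_mul] at hs
    rw [ho.neg_one_pow, ff, abs_of_neg (by linarith)]
    ring

lemma ff_pos (n : ℕ) : 0 < ff n := by
  rcases Nat.eq_zero_or_pos n with rfl | h
  · simp [ff]
  · have hs := sign_P n h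
    have : (descPochhammer ℝ n).eval (1/2:ℝ) ≠ 0 := by
      intro hz; rw [hz, mul_zero] at hs; exact lt_irrefl _ hs
    exact abs_pos.mpr this

lemma ff_zero : ff 0 = 1 := by simp [ff]

lemma key (n : ℕ) (hn : 2 ≤ n) :
    ∑ i ∈ Finset.Ico 1 n, (n.choose i : ℝ) * ff i * ff (n - i) = 2 * ff n := by
  have h0 := vand n hn
  rw [Finset.sum_range_succ] at h0
  rw [Finset.range_eq_Ico, Finset.sum_eq_sum_Ico_succ_bot (by omega : 0 < n)] at h0
  simp only [Nat.choose_zero_right, Nat.choose_self, Nat.sub_zero, Nat.sub_self,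
    descPochhammer_zero, Polynomial.eval_one, Nat.cast_one, one_mul, mul_one,
    Nat.zero_add, zero_add] at h0
  have hmid : ∑ k ∈ Finset.Ico 1 n, (n.choose k : ℝ) *
      ((descPochhammer ℝ k).eval (1/2:ℝ) * (descPochhammer ℝ (n-k)).eval (1/2:ℝ))
      = (-1:ℝ)^n * ∑ i ∈ Finset.Ico 1 n, (n.choose i : ℝ) * ff i * ff (n - i) := by
    rw [Finset.mul_sum]
    refine Finset.sum_congr rfl ?_
    intro k hk
    obtain ⟨hk1, hk2⟩ := Finset.mem_Ico.mp hk
    rw [P_eq k hk1, P_eq (n-k) (by omega)]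
    have hp : (-1:ℝ)^(k+1) * (-1:ℝ)^(n-k+1) = (-1:ℝ)^n := by
      rw [← pow_add, show k+1+(n-k+1) = n + 2 by omega, pow_add]; norm_num
    linear_combination (n.choose k : ℝ) * ff k * ff (n-k) * hp
  rw [hmid, P_eq n (by omega), pow_succ] at h0
  have hpow : ((-1:ℝ)^n) ≠ 0 := pow_ne_zero _ (by norm_num)
  have h2 : (-1:ℝ)^n * ((∑ i ∈ Finset.Ico 1 n, (n.choose i : ℝ) * ff i * ff (n - i)) - 2 * ff n)
      = 0 := by linear_combination h0
  rcases mul_eq_zero.mp h2 with h | h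
  · exact absurd h hpow
  · linarith

theorem stmt3 (n : ℕ) :
    (∑ i ∈ Finset.Ico 1 n, (n.choose i : ℝ) * ff i * ff (n - i) ≤ 2 * ff n) ∧
    (∑ i ∈ Finset.Icc 1 n, (n.choose i : ℝ) * ff i * ff (n - i) ≤ 3 * ff n) ∧
    (∑ i ∈ Finset.range (n + 1), (n.choose i : ℝ) * ff i * ff (n - i) ≤ 4 * ff n) := by
  have hffn := ff_pos n
  have h1 : ∑ i ∈ Finset.Ico 1 n, (n.choose i : ℝ) * ff i * ff (n - i) ≤ 2 * ff n := by
    rcases lt_or_ge n 2 with h | h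
    · interval_cases n <;> simp <;> positivity
    · exact le_of_eq (key n h)
  have h2 : ∑ i ∈ Finset.Icc 1 n, (n.choose i : ℝ) * ff i * ff (n - i) ≤ 3 * ff n := by
    rcases Nat.eq_zero_or_pos n with rfl | hn
    · simp; positivity
    · have : Finset.Icc 1 n = Finset.Ico 1 (n+1) := by rfl
      rw [this, Finset.sum_Ico_succ_top (by omega)]
      simp only [Nat.choose_self, Nat.sub_self, ff_zero, Nat.cast_one, one_mul, mul_one]
      linarith
  refine ⟨h1, h2, ?_⟩
  have : Finset.range (n+1) = Finset.Ico 0 (n+1) := by rw [Finset.range_eq_Ico]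
  rw [this, Finset.sum_eq_sum_Ico_succ_bot (by omega : 0 < n + 1)]
  simp only [Nat.choose_zero_right, Nat.sub_zero, ff_zero, Nat.cast_one, one_mul, mul_one,
    Nat.zero_add, zero_add]
  have : Finset.Ico 1 (n+1) = Finset.Icc 1 n := by rfl
  rw [this]
  linarith
end

section
/- For every multiindex ν ∈ ℕ₀^d, ∑_{0 < m ≤ ν} C(ν,m) · |(1/2)_{|ν−m|}| · |(1/2)_{|m|}| ≤ 3 · |(1/2)_{|ν|}|, with equality if and only if |ν| ≥ 2. -/
/-!
Grouping the multiindices by `|m| = k` and comparing coefficients in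
`∏ⱼ (X + 1) ^ νⱼ = (X + 1) ^ |ν|` reduces the sum to `∑ₖ C(n,k) |(1/2)ₖ| |(1/2)ₙ₋ₖ|`
with `n = |ν|`. By Chu–Vandermonde, `∑ₖ C(n,k) (x)ₖ (y)ₙ₋ₖ = (x + y)ₙ = (1)ₙ = 0` for `n ≥ 2`
when `x + y = 1`. For `0 ≤ x ≤ 1` the sign of `(x)ₖ₊₁` is `(-1)ᵏ`, so the inner terms all have
sign `(-1)ⁿ` and the two end terms `(x)ₙ`, `(y)ₙ` the opposite one; hence the inner terms add up
to `|(x)ₙ| + |(y)ₙ|`. At `x = y = 1/2` the full sum is `4 |(1/2)ₙ|`, and the term `m = 0`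
contributes `|(1/2)ₙ|`. For `n ≤ 1` the sums are computed directly.
-/

open Polynomial Finset

theorem Nat.sum_piFinset_prod_choose_eq_choose_sum {ι : Type*} [Fintype ι] [DecidableEq ι]
    (ν : ι → ℕ) (k : ℕ) :
    ∑ m ∈ Fintype.piFinset (fun j => range (ν j + 1)) with ∑ j, m j = k,
      ∏ j, (ν j).choose (m j) = (∑ j, ν j).choose k := by
  have h : ((X + 1 : ℕ[X]) ^ ∑ j, ν j) =
      ∑ m ∈ Fintype.piFinset (fun j => range (ν j + 1)),
        C (∏ j, (ν j).choose (m j)) * X ^ ∑ j, m j := by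
    rw [← prod_pow_eq_pow_sum]
    simp_rw [add_pow, one_pow, mul_one]
    rw [prod_univ_sum]
    simp_rw [map_prod, ← prod_pow_eq_pow_sum, ← prod_mul_distrib, mul_comm (X ^ _),
      ← C_eq_natCast, Nat.cast_id]
  have hcoeff := coeff_X_add_one_pow ℕ (∑ j, ν j) k
  rw [Nat.cast_id] at hcoeff
  rw [← hcoeff, h, finsetSum_coeff, sum_filter]
  simp_rw [coeff_C_mul_X_pow, eq_comm]

theorem Finset.sum_piFinset_prod_choose_mul {ι R : Type*} [Fintype ι] [DecidableEq ι]
    [CommSemiring R] (ν : ι → ℕ) (F : ℕ → R) :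
    ∑ m ∈ Fintype.piFinset (fun j => range (ν j + 1)), (∏ j, ((ν j).choose (m j) : R)) * F (∑ j, m j)
      = ∑ k ∈ range (∑ j, ν j + 1), ((∑ j, ν j).choose k : R) * F k := by
  have hmaps : ∀ m ∈ Fintype.piFinset (fun j => range (ν j + 1)),
      ∑ j, m j ∈ range (∑ j, ν j + 1) := fun m hm => by
    simp only [Fintype.mem_piFinset, mem_range, Nat.lt_succ_iff] at hm ⊢
    exact sum_le_sum fun j _ => hm j
  rw [← sum_fiberwise_of_maps_to hmaps]
  refine sum_congr rfl fun k _ => ?_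
  rw [← Nat.sum_piFinset_prod_choose_eq_choose_sum, Nat.cast_sum, sum_mul]
  refine sum_congr rfl fun m hm => ?_
  rw [(mem_filter.mp hm).2, Nat.cast_prod]

theorem descPochhammer_eval_add {R : Type*} [CommRing R] (x y : R) (n : ℕ) :
    (descPochhammer R n).eval (x + y) = ∑ ij ∈ antidiagonal n,
      n.choose ij.1 * ((descPochhammer R ij.1).eval x * (descPochhammer R ij.2).eval y) := by
  have h (k : ℕ) (z : R) : (descPochhammer ℤ k).smeval z = (descPochhammer R k).eval z := by
    rw [← eval₂_smulOneHom_eq_smeval, Subsingleton.elim RingHom.smulOneHom (Int.castRingHom R),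
      ← eval_map, descPochhammer_map]
  simpa only [h] using Ring.descPochhammer_smeval_add n (Commute.all x y)

theorem descPochhammer_eval_succ_eq_neg_one_pow_mul_abs {x : ℝ} (h0 : 0 ≤ x) (h1 : x ≤ 1)
    (k : ℕ) :
    (descPochhammer ℝ (k + 1)).eval x = (-1) ^ k * |(descPochhammer ℝ (k + 1)).eval x| := by
  induction k with
  | zero => simp [abs_of_nonneg h0]
  | succ k ih =>
    have hneg : x - ↑(k + 1) ≤ 0 := by push_cast; linarith [k.cast_nonneg (α := ℝ)]
    rw [descPochhammer_succ_eval, abs_mul, abs_of_nonpos hneg]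
    linear_combination (x - ↑(k + 1)) * ih

theorem sum_choose_mul_abs_descPochhammer_eval {x y : ℝ} (hx : 0 ≤ x) (hy : 0 ≤ y)
    (hxy : x + y = 1) {n : ℕ} (hn : 2 ≤ n) :
    ∑ k ∈ range (n + 1), (n.choose k : ℝ) *
        (|(descPochhammer ℝ k).eval x| * |(descPochhammer ℝ (n - k)).eval y|)
      = 2 * (|(descPochhammer ℝ n).eval x| + |(descPochhammer ℝ n).eval y|) := by
  obtain ⟨m, rfl⟩ := Nat.exists_eq_add_of_le' hn
  have sign {z : ℝ} (hz : 0 ≤ z) (hz1 : z ≤ 1) (k : ℕ) :=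
    descPochhammer_eval_succ_eq_neg_one_pow_mul_abs hz hz1 k
  have hx1 : x ≤ 1 := by linarith
  have hy1 : y ≤ 1 := by linarith
  have hvanish : ∑ k ∈ range (m + 2 + 1), ((m + 2).choose k : ℝ) *
      ((descPochhammer ℝ k).eval x * (descPochhammer ℝ (m + 2 - k)).eval y) = 0 := by
    have h := descPochhammer_eval_add x y (m + 2)
    rwa [hxy, ← Nat.cast_one, descPochhammer_eval_coe_nat_of_lt (by omega),
      Nat.sum_antidiagonal_eq_sum_range_succ_mk, eq_comm] at h
  have hmid : ∀ i ∈ range (m + 1), ((m + 2).choose (i + 1) : ℝ) *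
      ((descPochhammer ℝ (i + 1)).eval x * (descPochhammer ℝ (m + 2 - (i + 1))).eval y)
      = (-1) ^ m * (((m + 2).choose (i + 1) : ℝ) * (|(descPochhammer ℝ (i + 1)).eval x| *
        |(descPochhammer ℝ (m + 2 - (i + 1))).eval y|)) := fun i hi => by
    have hi : i ≤ m := Nat.lt_succ_iff.mp (mem_range.mp hi)
    rw [show m + 2 - (i + 1) = m - i + 1 by omega]
    conv_lhs => rw [sign hx hx1, sign hy hy1]
    rw [show (-1 : ℝ) ^ m = (-1) ^ i * (-1) ^ (m - i) by rw [← pow_add, Nat.add_sub_cancel' hi]]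
    ring
  rw [sum_range_succ, sum_range_succ'] at hvanish ⊢
  rw [sum_congr rfl hmid, ← mul_sum] at hvanish
  simp only [Nat.choose_zero_right, Nat.choose_self, Nat.sub_zero, Nat.sub_self,
    descPochhammer_zero, eval_one, abs_one, Nat.cast_one, one_mul, mul_one] at hvanish ⊢
  rw [sign hx hx1, sign hy hy1, pow_succ] at hvanish
  rcases neg_one_pow_eq_or ℝ m with hs | hs <;> rw [hs] at hvanish <;> linarith

theorem sum_choose_mul_ff_mul_ff {n : ℕ} (hn : 2 ≤ n) :
    ∑ k ∈ range (n + 1), (n.choose k : ℝ) * (ff k * ff (n - k)) = 4 * ff n := by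
  have h := sum_choose_mul_abs_descPochhammer_eval (x := 1 / 2) (y := 1 / 2)
    (by norm_num) (by norm_num) (by norm_num) hn
  rw [← two_mul, ← mul_assoc] at h
  norm_num at h
  exact h

theorem stmt12 (d : ℕ) (ν : Fin d → ℕ) :
    (∑ m ∈ (Fintype.piFinset fun j => Finset.range (ν j + 1)).filter (fun m => m ≠ 0),
        (∏ j, ((ν j).choose (m j) : ℝ)) * ff (∑ j, (ν j - m j)) * ff (∑ j, m j)
      ≤ 3 * ff (∑ j, ν j)) ∧
    ((∑ m ∈ (Fintype.piFinset fun j => Finset.range (ν j + 1)).filter (fun m => m ≠ 0),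
        (∏ j, ((ν j).choose (m j) : ℝ)) * ff (∑ j, (ν j - m j)) * ff (∑ j, m j)
      = 3 * ff (∑ j, ν j)) ↔ 2 ≤ ∑ j, ν j) := by
  set n := ∑ j, ν j with hn
  have hsum : ∑ m ∈ (Fintype.piFinset fun j => range (ν j + 1)).filter (fun m => m ≠ 0),
        (∏ j, ((ν j).choose (m j) : ℝ)) * ff (∑ j, (ν j - m j)) * ff (∑ j, m j)
      = ∑ k ∈ range (n + 1), (n.choose k : ℝ) * (ff k * ff (n - k)) - ff n := by
    have h0 : (0 : Fin d → ℕ) ∈ Fintype.piFinset fun j => range (ν j + 1) := by simp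
    rw [filter_ne', sum_erase_eq_sub h0, hn, ← sum_piFinset_prod_choose_mul]
    congr 1
    · refine sum_congr rfl fun m hm => ?_
      simp only [Fintype.mem_piFinset, mem_range, Nat.lt_succ_iff] at hm
      rw [sum_tsub_distrib _ fun j _ => hm j]
      ring
    · simp [ff]
  rw [hsum]
  rcases n with _ | _ | n
  · norm_num [ff]
  · norm_num [sum_range_succ, ff]
  · rw [sum_choose_mul_ff_mul_ff (by omega)]
    exact ⟨by linarith, iff_of_true (by ring) (by omega)⟩
end
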